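/- Under the canonical form hypotheses, for α > 0 not an eigenvalue of the pencil, the number of eigenvalues λ of K - λK_G with 0 < λ < α and eigenvector orthogonal to Z_c equals ν_-(K - αK_G) - ν_+(Z_N^T K_G Z_N), where ν_± denote the numbers of positive/negative eigenvalues. -/

import Mathlib

/-!
By the canonical form, `W` congruence-diagonalises `K - α K_G` to
`diag (1 - α Λ₁, -α Λ₂, 0)`, and `Z_N = W [0; R₂₂; R₃₂]` gives `Z_Nᵀ K_G Z_N = R₂₂ᵀ Λ₂ R₂₂`.
By Sylvester's law of inertia the number of negative (positive) eigenvalues of a symmetric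
matrix can be read off any diagonal matrix congruent to it. Since `α > 0`, the entry
`1 - α Λ₁ᵢ` is negative exactly when `0 < Λ₁ᵢ⁻¹ < α`, and `-α Λ₂ᵢ` exactly when `Λ₂ᵢ > 0`.
-/

open Matrix QuadraticMap QuadraticForm

namespace Matrix

section CommRing

variable {R : Type*} [CommRing R] {n : Type*} [Fintype n] [DecidableEq n]

lemma toQuadraticForm'_apply (A : Matrix n n R) (x : n → R) :
    A.toQuadraticForm' x = x ⬝ᵥ A *ᵥ x := by
  simp [toQuadraticForm', toLinearMap₂'_apply']

lemma toQuadraticForm'_diagonal (d : n → R) :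
    (diagonal d).toQuadraticForm' = weightedSumSquares R d := by
  ext x
  simp only [toQuadraticForm'_apply, weightedSumSquares_apply, dotProduct, mulVec_diagonal,
    smul_eq_mul]
  exact Finset.sum_congr rfl fun i _ => by ring

lemma toQuadraticForm'_mulVec (A W : Matrix n n R) (x : n → R) :
    A.toQuadraticForm' (W *ᵥ x) = (Wᵀ * A * W).toQuadraticForm' x := by
  rw [toQuadraticForm'_apply, toQuadraticForm'_apply, mulVec_mulVec, ← vecMul_transpose,
    dotProduct_mulVec, dotProduct_mulVec, vecMul_vecMul, Matrix.mul_assoc]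

lemma toQuadraticForm'_equivalent_weightedSumSquares {A W : Matrix n n R} {d : n → R}
    (hW : IsUnit W) (h : Wᵀ * A * W = diagonal d) :
    A.toQuadraticForm'.Equivalent (weightedSumSquares R d) :=
  letI := hW.invertible
  ⟨QuadraticMap.IsometryEquiv.symm
    { toLinearEquiv := W.toLinearEquiv' this
      map_app' := fun x => by
        change A.toQuadraticForm' (W *ᵥ x) = _
        rw [toQuadraticForm'_mulVec, h, toQuadraticForm'_diagonal] }⟩

lemma transpose_nonsing_inv_mul_mul_nonsing_inv {V : Matrix n n R} (hV : IsUnit V)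
    (B : Matrix n n R) : V⁻¹ᵀ * (Vᵀ * B * V) * V⁻¹ = B := by
  have hdet := (isUnit_iff_isUnit_det V).mp hV
  rw [Matrix.mul_assoc, mul_nonsing_inv_cancel_right _ _ hdet, ← Matrix.mul_assoc,
    transpose_nonsing_inv, nonsing_inv_mul _ (by rwa [det_transpose]), Matrix.one_mul]

end CommRing

section OrderedField

variable {𝕜 : Type*} [Field 𝕜] [LinearOrder 𝕜] [IsStrictOrderedRing 𝕜]
  {n : Type*} [Fintype n] [DecidableEq n]

lemma sigNeg_toQuadraticForm' {A W : Matrix n n 𝕜} {d : n → 𝕜}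
    (hW : IsUnit W) (h : Wᵀ * A * W = diagonal d) :
    sigNeg A.toQuadraticForm' = Nat.card {i // d i < 0} :=
  sigNeg_of_equiv_weightedSumSquares (toQuadraticForm'_equivalent_weightedSumSquares hW h)

lemma sigPos_toQuadraticForm' {A W : Matrix n n 𝕜} {d : n → 𝕜}
    (hW : IsUnit W) (h : Wᵀ * A * W = diagonal d) :
    sigPos A.toQuadraticForm' = Nat.card {i // 0 < d i} :=
  sigPos_of_equiv_weightedSumSquares (toQuadraticForm'_equivalent_weightedSumSquares hW h)

end OrderedField

namespace IsHermitian

variable {n : Type*} [Fintype n] [DecidableEq n] {A : Matrix n n ℝ}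

lemma transpose_eigenvectorUnitary_mul_mul (hA : A.IsHermitian) :
    (hA.eigenvectorUnitary : Matrix n n ℝ)ᵀ * A * hA.eigenvectorUnitary
      = diagonal hA.eigenvalues := by
  simpa [Unitary.conjStarAlgAut_star_apply, star_eq_conjTranspose] using
    hA.conjStarAlgAut_star_eigenvectorUnitary

lemma card_eigenvalues_neg {W : Matrix n n ℝ} {d : n → ℝ} (hA : A.IsHermitian)
    (hW : IsUnit W) (h : Wᵀ * A * W = diagonal d) :
    Nat.card {i // hA.eigenvalues i < 0} = Nat.card {i // d i < 0} := by
  rw [← sigNeg_toQuadraticForm' hW h,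
    sigNeg_toQuadraticForm' Unitary.isUnit_coe hA.transpose_eigenvectorUnitary_mul_mul]

lemma card_eigenvalues_pos {W : Matrix n n ℝ} {d : n → ℝ} (hA : A.IsHermitian)
    (hW : IsUnit W) (h : Wᵀ * A * W = diagonal d) :
    Nat.card {i // 0 < hA.eigenvalues i} = Nat.card {i // 0 < d i} := by
  rw [← sigPos_toQuadraticForm' hW h,
    sigPos_toQuadraticForm' Unitary.isUnit_coe hA.transpose_eigenvectorUnitary_mul_mul]

end IsHermitian

end Matrix

lemma one_sub_mul_neg_iff {𝕜 : Type*} [Field 𝕜] [LinearOrder 𝕜] [IsStrictOrderedRing 𝕜]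
    {α x : 𝕜} (hα : 0 < α) : 1 - α * x < 0 ↔ x ≠ 0 ∧ 0 < x⁻¹ ∧ x⁻¹ < α := by
  constructor
  · intro h
    have hx : 0 < x := pos_of_mul_pos_right (by linarith) hα.le
    exact ⟨hx.ne', inv_pos.mpr hx, (inv_lt_iff_one_lt_mul₀ hx).mpr (by linarith)⟩
  · rintro ⟨-, hx, hlt⟩
    have := (inv_lt_iff_one_lt_mul₀ (inv_pos.mp hx)).mp hlt
    linarith

theorem stmt19_general {n1 n2 n3 : ℕ}
    (K KG : Matrix (Fin n1 ⊕ (Fin n2 ⊕ Fin n3)) (Fin n1 ⊕ (Fin n2 ⊕ Fin n3)) ℝ)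
    (W : Matrix (Fin n1 ⊕ (Fin n2 ⊕ Fin n3)) (Fin n1 ⊕ (Fin n2 ⊕ Fin n3)) ℝ)
    (hW : IsUnit W)
    (Λ1 : Fin n1 → ℝ) (Λ2 : Fin n2 → ℝ)
    (hcanKG : Wᵀ * KG * W
      = Matrix.fromBlocks (Matrix.diagonal Λ1) 0 0
          (Matrix.fromBlocks (Matrix.diagonal Λ2) 0 0 0))
    (hcanK : Wᵀ * K * W
      = Matrix.fromBlocks (1 : Matrix (Fin n1) (Fin n1) ℝ) 0 0 0)
    (ZN : Matrix (Fin n1 ⊕ (Fin n2 ⊕ Fin n3)) (Fin n2) ℝ)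
    (R22 : Matrix (Fin n2) (Fin n2) ℝ) (R32 : Matrix (Fin n3) (Fin n2) ℝ)
    (hR22 : IsUnit R22)
    (hZN : ZN = W.submatrix id (Sum.inr ∘ Sum.inl : Fin n2 → _) * R22
      + W.submatrix id (Sum.inr ∘ Sum.inr : Fin n3 → _) * R32)
    (α : ℝ) (hα : 0 < α) :
    ∀ (h1 : (K - α • KG).IsHermitian) (h2 : (ZNᵀ * KG * ZN).IsHermitian),
      Nat.card {i : Fin n1 // Λ1 i ≠ 0 ∧ 0 < (Λ1 i)⁻¹ ∧ (Λ1 i)⁻¹ < α}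
          + Nat.card {i // 0 < h2.eigenvalues i}
        = Nat.card {i // h1.eigenvalues i < 0} := by
  intro h1 h2
  have hpencil : Wᵀ * (K - α • KG) * W = diagonal (Sum.elim (fun i => 1 - α * Λ1 i)
      (Sum.elim (fun i => -(α * Λ2 i)) 0)) := by
    rw [Matrix.mul_sub, Matrix.sub_mul, Matrix.mul_smul, Matrix.smul_mul, hcanK, hcanKG]
    ext (i | i | i) (j | j | j) <;> simp [diagonal_apply, one_apply] <;> split_ifs <;> simp
  set E : Matrix (Fin n1 ⊕ (Fin n2 ⊕ Fin n3)) (Fin n2) ℝ := fromRows 0 (fromRows R22 R32)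
  have hZN_eq : ZN = W * E := by
    rw [hZN]
    ext i j
    simp [E, mul_apply, Fintype.sum_sum_type]
  have hZN_form : ZNᵀ * KG * ZN = R22ᵀ * diagonal Λ2 * R22 :=
    calc ZNᵀ * KG * ZN = Eᵀ * (Wᵀ * KG * W) * E := by
          rw [hZN_eq, transpose_mul]; simp only [Matrix.mul_assoc]
      _ = _ := by
          rw [hcanKG]; simp [E, transpose_fromRows, fromCols_mul_fromBlocks, fromCols_mul_fromRows]
  have hZN_diag := transpose_nonsing_inv_mul_mul_nonsing_inv hR22 (diagonal Λ2)
  rw [← hZN_form] at hZN_diag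
  rw [h1.card_eigenvalues_neg hW hpencil,
    h2.card_eigenvalues_pos (isUnit_nonsing_inv_iff.mpr hR22) hZN_diag,
    Nat.card_congr Equiv.subtypeSum, Nat.card_sum, Nat.card_congr Equiv.subtypeSum, Nat.card_sum]
  simp [one_sub_mul_neg_iff hα, hα]

/-- as STATEMENT 18 but for α > 0: the number of pencil
eigenvalues of the pencil K - λK_G with eigenvector ⟂ Z_c are the reciprocals of
the nonzero diagonal entries of Λ₁), for α < 0 not an eigenvalue, the number of such
eigenvalues in (0, α) equals ν₋(K - αK_G) - ν₊(Z_Nᵀ K_G Z_N), stated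
additively: n(0,α) + ν₊(Z_Nᵀ K_G Z_N) = ν₋(K - αK_G). -/
theorem stmt19 {n1 n2 n3 : ℕ}
    (K KG : Matrix (Fin n1 ⊕ (Fin n2 ⊕ Fin n3)) (Fin n1 ⊕ (Fin n2 ⊕ Fin n3)) ℝ)
    (hKpsd : K.PosSemidef) (hKG : KGᵀ = KG)
    (W : Matrix (Fin n1 ⊕ (Fin n2 ⊕ Fin n3)) (Fin n1 ⊕ (Fin n2 ⊕ Fin n3)) ℝ)
    (hW : IsUnit W)
    (Λ1 : Fin n1 → ℝ) (Λ2 : Fin n2 → ℝ) (hΛ2 : ∀ i, Λ2 i ≠ 0)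
    (hcanKG : Wᵀ * KG * W
      = Matrix.fromBlocks (Matrix.diagonal Λ1) 0 0
          (Matrix.fromBlocks (Matrix.diagonal Λ2) 0 0 0))
    (hcanK : Wᵀ * K * W
      = Matrix.fromBlocks (1 : Matrix (Fin n1) (Fin n1) ℝ) 0 0 0)
    (ZN : Matrix (Fin n1 ⊕ (Fin n2 ⊕ Fin n3)) (Fin n2) ℝ)
    (R22 : Matrix (Fin n2) (Fin n2) ℝ) (R32 : Matrix (Fin n3) (Fin n2) ℝ)
    (hR22 : IsUnit R22)
    (hZN : ZN = W.submatrix id (Sum.inr ∘ Sum.inl : Fin n2 → _) * R22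
      + W.submatrix id (Sum.inr ∘ Sum.inr : Fin n3 → _) * R32)
    (α : ℝ) (hα : 0 < α) (hreg : ∀ i, 1 - α * Λ1 i ≠ 0) :
    ∀ (h1 : (K - α • KG).IsHermitian) (h2 : (ZNᵀ * KG * ZN).IsHermitian),
      Nat.card {i : Fin n1 // Λ1 i ≠ 0 ∧ 0 < (Λ1 i)⁻¹ ∧ (Λ1 i)⁻¹ < α}
          + Nat.card {i // 0 < h2.eigenvalues i}
        = Nat.card {i // h1.eigenvalues i < 0} :=
  stmt19_general K KG W hW Λ1 Λ2 hcanKG hcanK ZN R22 R32 hR22 hZN α hα
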